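/- Let F(c₁,c₂,c₃,x,y) = (x+y−c₁)^{s₁}(x−c₂)^{s₂}(y−c₃)^{s₃} with s₁,s₂,s₃ real, defined on the open set where x+y−c₁ > 0, x−c₂ > 0, y−c₃ > 0. Then (c₁−c₂−c₃)·∂³F/∂c₁∂c₂∂c₃ − s₁·∂²F/∂c₂∂c₃ + s₂·∂²F/∂c₁∂c₃ + s₃·∂²F/∂c₁∂c₂ = 0 on this open set. -/
import Mathlib

private lemma drpow (u s c : ℝ) (h : 0 < u - c) :
    deriv (fun t : ℝ => (u - t) ^ s) c = -(s * (u - c) ^ (s - 1)) := by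
  have hd : HasDerivAt (fun t : ℝ => (u - t) ^ s) (-1 * s * (u - c) ^ (s - 1)) c := by
    have h0 : HasDerivAt (fun t : ℝ => u - t) (-1 : ℝ) c := by
      simpa using (hasDerivAt_id c).const_sub u
    exact h0.rpow_const (Or.inl (ne_of_gt h))
  simpa using hd.deriv

private lemma dmul (K u s c : ℝ) (h : 0 < u - c) :
    deriv (fun t : ℝ => K * (u - t) ^ s) c = K * -(s * (u - c) ^ (s - 1)) := by
  rw [deriv_const_mul, drpow u s c h]
  have h0 : HasDerivAt (fun t : ℝ => u - t) (-1 : ℝ) c := by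
    simpa using (hasDerivAt_id c).const_sub u
  exact (h0.rpow_const (Or.inl (ne_of_gt h))).differentiableAt

theorem stmt5 (s1 s2 s3 x y c1 c2 c3 : ℝ)
    (h1 : 0 < x + y - c1) (h2 : 0 < x - c2) (h3 : 0 < y - c3) :
    (c1 - c2 - c3) *
        deriv (fun a => deriv (fun b => deriv
          (fun c => (x + y - a) ^ s1 * (x - b) ^ s2 * (y - c) ^ s3) c3) c2) c1
      - s1 * deriv (fun b => deriv
          (fun c => (x + y - c1) ^ s1 * (x - b) ^ s2 * (y - c) ^ s3) c3) c2
      + s2 * deriv (fun a => deriv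
          (fun c => (x + y - a) ^ s1 * (x - c2) ^ s2 * (y - c) ^ s3) c3) c1
      + s3 * deriv (fun a => deriv
          (fun b => (x + y - a) ^ s1 * (x - b) ^ s2 * (y - c3) ^ s3) c2) c1 = 0 := by
  set A1 := (x + y - c1) ^ s1 with hA1
  set A2 := (x - c2) ^ s2 with hA2
  set A3 := (y - c3) ^ s3 with hA3
  set D1 := -(s1 * (x + y - c1) ^ (s1 - 1)) with hD1
  set D2 := -(s2 * (x - c2) ^ (s2 - 1)) with hD2
  set D3 := -(s3 * (y - c3) ^ (s3 - 1)) with hD3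
  have e3 : ∀ K : ℝ, deriv (fun c => K * (y - c) ^ s3) c3 = K * D3 :=
    fun K => dmul K y s3 c3 h3
  have e2 : ∀ K : ℝ, deriv (fun b => K * (x - b) ^ s2) c2 = K * D2 :=
    fun K => dmul K x s2 c2 h2
  have e1 : ∀ K : ℝ, deriv (fun a => K * (x + y - a) ^ s1) c1 = K * D1 :=
    fun K => dmul K (x + y) s1 c1 h1
  -- innermost derivative of the triple term
  have t1 : deriv (fun a => deriv (fun b => deriv
      (fun c => (x + y - a) ^ s1 * (x - b) ^ s2 * (y - c) ^ s3) c3) c2) c1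
      = D1 * D2 * D3 := by
    have step : (fun a => deriv (fun b => deriv
        (fun c => (x + y - a) ^ s1 * (x - b) ^ s2 * (y - c) ^ s3) c3) c2)
        = fun a => (D2 * D3) * (x + y - a) ^ s1 := by
      funext a
      have : (fun b => deriv
          (fun c => (x + y - a) ^ s1 * (x - b) ^ s2 * (y - c) ^ s3) c3)
          = fun b => ((x + y - a) ^ s1 * D3) * (x - b) ^ s2 := by
        funext b
        have := e3 ((x + y - a) ^ s1 * (x - b) ^ s2)
        rw [this]; ring
      rw [this, e2]; ring
    rw [step, e1]; ring
  have t2 : deriv (fun b => deriv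
      (fun c => (x + y - c1) ^ s1 * (x - b) ^ s2 * (y - c) ^ s3) c3) c2
      = A1 * D2 * D3 := by
    have : (fun b => deriv
        (fun c => (x + y - c1) ^ s1 * (x - b) ^ s2 * (y - c) ^ s3) c3)
        = fun b => (A1 * D3) * (x - b) ^ s2 := by
      funext b
      have := e3 ((x + y - c1) ^ s1 * (x - b) ^ s2)
      rw [this]; ring
    rw [this, e2]; ring
  have t3 : deriv (fun a => deriv
      (fun c => (x + y - a) ^ s1 * (x - c2) ^ s2 * (y - c) ^ s3) c3) c1
      = A2 * D1 * D3 := by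
    have : (fun a => deriv
        (fun c => (x + y - a) ^ s1 * (x - c2) ^ s2 * (y - c) ^ s3) c3)
        = fun a => (A2 * D3) * (x + y - a) ^ s1 := by
      funext a
      have := e3 ((x + y - a) ^ s1 * A2)
      rw [this]; ring
    rw [this, e1]; ring
  have t4 : deriv (fun a => deriv
      (fun b => (x + y - a) ^ s1 * (x - b) ^ s2 * (y - c3) ^ s3) c2) c1
      = A3 * D1 * D2 := by
    have : (fun a => deriv
        (fun b => (x + y - a) ^ s1 * (x - b) ^ s2 * (y - c3) ^ s3) c2)
        = fun a => (A3 * D2) * (x + y - a) ^ s1 := by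
      funext a
      have : (fun b => (x + y - a) ^ s1 * (x - b) ^ s2 * (y - c3) ^ s3)
          = fun b => ((x + y - a) ^ s1 * A3) * (x - b) ^ s2 := by
        funext b; ring
      rw [this, e2]; ring
    rw [this, e1]; ring
  rw [t1, t2, t3, t4]
  -- key algebraic identities: sᵢ * Aᵢ = -Dᵢ * (arg)
  have k1 : s1 * A1 = -D1 * (x + y - c1) := by
    rw [hA1, hD1, neg_neg, mul_assoc,
      ← Real.rpow_add_one (ne_of_gt h1), sub_add_cancel]
  have k2 : s2 * A2 = -D2 * (x - c2) := by
    rw [hA2, hD2, neg_neg, mul_assoc,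
      ← Real.rpow_add_one (ne_of_gt h2), sub_add_cancel]
  have k3 : s3 * A3 = -D3 * (y - c3) := by
    rw [hA3, hD3, neg_neg, mul_assoc,
      ← Real.rpow_add_one (ne_of_gt h3), sub_add_cancel]
  have expand : (c1 - c2 - c3) * (D1 * D2 * D3) - (s1 * A1) * (D2 * D3)
      + (s2 * A2) * (D1 * D3) + (s3 * A3) * (D1 * D2) = 0 := by
    rw [k1, k2, k3]; ring
  linarith [expand]
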